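/- arXiv:1702.02358 — 4 statements merged into one kernel-verified Lean document; each statement's English description precedes it below -/
import Mathlib

section
/- Let r be a positive integer and let Δ be a positive integer. If G is a finite simple graph of maximum degree at most Δ, then the r-degenerate chromatic index of G satisfies χ'_r(G) ≤ 2(Δ-1)²/(r+1) + 2(Δ-1) + 1. -/
variable {V : Type*}

/-- A matching in `G`: a set of pairwise non-adjacent edges of `G`. -/
def IsMatching (G : SimpleGraph V) (M : Finset (Sym2 V)) : Prop :=
  (M : Set (Sym2 V)) ⊆ G.edgeSet ∧
    ∀ e ∈ M, ∀ f ∈ M, e ≠ f → ∀ v : V, v ∈ e → v ∉ f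

/-- `V(M)`: the set of vertices incident with an edge of `M`. -/
def mVerts (M : Finset (Sym2 V)) : Set V := {v | ∃ e ∈ M, v ∈ e}

/-- The induced subgraph `G[S]` is `r`-degenerate: every subgraph of `G[S]` of order at
least one has a vertex of degree at most `r` (equivalently, this holds for every
nonempty induced subgraph, i.e. for every nonempty `s ⊆ S`). -/
def DegenerateOn (G : SimpleGraph V) (r : ℕ) (S : Set V) : Prop :=
  ∀ s : Set V, s ⊆ S → s.Nonempty → ∃ v ∈ s, ({u ∈ s | G.Adj v u}).ncard ≤ r

/-- An `r`-degenerate matching: a matching `M` such that `G[V(M)]` is `r`-degenerate. -/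
def IsDegMatching (G : SimpleGraph V) (r : ℕ) (M : Finset (Sym2 V)) : Prop :=
  IsMatching G M ∧ DegenerateOn G r (mVerts M)

/-- The `r`-degenerate chromatic index `χ'_r(G)`: the minimum number of parts in a
partition of the edge set of `G` into `r`-degenerate matchings. -/
noncomputable def degChromIndex (G : SimpleGraph V) (r : ℕ) : ℕ :=
  sInf {n | ∃ P : Fin n → Finset (Sym2 V),
    (∀ i, IsDegMatching G r (P i)) ∧ ∀ e ∈ G.edgeSet, ∃! i, e ∈ P i}

section Aux
variable {V : Type*} [DecidableEq V] {G : SimpleGraph V} {r : ℕ}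

lemma mVerts_empty : mVerts (∅ : Finset (Sym2 V)) = ∅ := by
  ext v; simp [mVerts]

lemma isDegMatching_empty : IsDegMatching G r (∅ : Finset (Sym2 V)) := by
  refine ⟨⟨by simp, by simp⟩, ?_⟩
  intro s hs hne
  rw [mVerts_empty, Set.subset_empty_iff] at hs
  exact absurd (hs ▸ hne) (by simp)

lemma mVerts_insert (e : Sym2 V) (M : Finset (Sym2 V)) :
    mVerts (insert e M) = {v | v ∈ e} ∪ mVerts M := by
  ext v; simp [mVerts]

lemma insert_isDegMatching [Fintype V] {u v : V} (huv : G.Adj u v) {M : Finset (Sym2 V)}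
    (hM : IsDegMatching G r M) (hdisj : ∀ f ∈ M, u ∉ f ∧ v ∉ f)
    (hcount : ({w ∈ mVerts M | G.Adj u w}).ncard + ({w ∈ mVerts M | G.Adj v w}).ncard ≤ r)
    (hr : 1 ≤ r) :
    IsDegMatching G r (insert s(u,v) M) := by
  have hne : s(u,v) ∉ M := fun h => (hdisj _ h).1 (by simp)
  constructor
  · constructor
    · intro f hf
      simp only [Finset.coe_insert, Set.mem_insert_iff] at hf
      rcases hf with rfl | hf
      · exact huv
      · exact hM.1.1 hf
    · intro e he f hf hef w hwe
      simp only [Finset.mem_insert] at he hf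
      rcases he with rfl | he <;> rcases hf with rfl | hf
      · exact absurd rfl hef
      · intro hwf
        rcases Sym2.mem_iff.mp hwe with rfl | rfl
        · exact (hdisj f hf).1 hwf
        · exact (hdisj f hf).2 hwf
      · intro hwf
        rcases Sym2.mem_iff.mp hwf with rfl | rfl
        · exact (hdisj e he).1 hwe
        · exact (hdisj e he).2 hwe
      · exact hM.1.2 e he f hf hef w hwe
  · -- degeneracy
    intro S hS hSne
    rw [mVerts_insert] at hS
    by_cases hu : u ∈ S <;> by_cases hv : v ∈ S
    · -- both endpoints in S
      have hsubu : {w ∈ S | G.Adj u w} ⊆ insert v {w ∈ mVerts M | G.Adj u w} := by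
        intro w hw
        obtain ⟨hwS, hadj⟩ := hw
        rcases hS hwS with hw' | hw'
        · simp only [Sym2.mem_iff, Set.mem_setOf_eq] at hw'
          rcases hw' with rfl | rfl
          · exact absurd hadj (G.irrefl)
          · exact Set.mem_insert _ _
        · exact Set.mem_insert_of_mem _ ⟨hw', hadj⟩
      have hsubv : {w ∈ S | G.Adj v w} ⊆ insert u {w ∈ mVerts M | G.Adj v w} := by
        intro w hw
        obtain ⟨hwS, hadj⟩ := hw
        rcases hS hwS with hw' | hw'
        · simp only [Sym2.mem_iff, Set.mem_setOf_eq] at hw'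
          rcases hw' with rfl | rfl
          · exact Set.mem_insert _ _
          · exact absurd hadj (G.irrefl)
        · exact Set.mem_insert_of_mem _ ⟨hw', hadj⟩
      have hcu : ({w ∈ S | G.Adj u w}).ncard ≤ 1 + ({w ∈ mVerts M | G.Adj u w}).ncard := by
        calc ({w ∈ S | G.Adj u w}).ncard ≤ (insert v {w ∈ mVerts M | G.Adj u w}).ncard :=
              Set.ncard_le_ncard hsubu (Set.toFinite _)
          _ ≤ 1 + ({w ∈ mVerts M | G.Adj u w}).ncard := by
              rw [add_comm]; exact Set.ncard_insert_le _ _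
      have hcv : ({w ∈ S | G.Adj v w}).ncard ≤ 1 + ({w ∈ mVerts M | G.Adj v w}).ncard := by
        calc ({w ∈ S | G.Adj v w}).ncard ≤ (insert u {w ∈ mVerts M | G.Adj v w}).ncard :=
              Set.ncard_le_ncard hsubv (Set.toFinite _)
          _ ≤ 1 + ({w ∈ mVerts M | G.Adj v w}).ncard := by
              rw [add_comm]; exact Set.ncard_insert_le _ _
      have hsum : ({w ∈ S | G.Adj u w}).ncard + ({w ∈ S | G.Adj v w}).ncard ≤ r + 2 := by
        omega
      rcases le_or_gt ({w ∈ S | G.Adj u w}).ncard ({w ∈ S | G.Adj v w}).ncard with h | h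
      · exact ⟨u, hu, by omega⟩
      · exact ⟨v, hv, by omega⟩
    · -- u ∈ S, v ∉ S
      refine ⟨u, hu, ?_⟩
      have hsub : {w ∈ S | G.Adj u w} ⊆ {w ∈ mVerts M | G.Adj u w} := by
        intro w hw
        obtain ⟨hwS, hadj⟩ := hw
        rcases hS hwS with hw' | hw'
        · simp only [Sym2.mem_iff, Set.mem_setOf_eq] at hw'
          rcases hw' with rfl | rfl
          · exact absurd hadj (G.irrefl)
          · exact absurd hwS hv
        · exact ⟨hw', hadj⟩
      calc ({w ∈ S | G.Adj u w}).ncard ≤ ({w ∈ mVerts M | G.Adj u w}).ncard :=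
            Set.ncard_le_ncard hsub (Set.toFinite _)
        _ ≤ r := by omega
    · -- v ∈ S, u ∉ S
      refine ⟨v, hv, ?_⟩
      have hsub : {w ∈ S | G.Adj v w} ⊆ {w ∈ mVerts M | G.Adj v w} := by
        intro w hw
        obtain ⟨hwS, hadj⟩ := hw
        rcases hS hwS with hw' | hw'
        · simp only [Sym2.mem_iff, Set.mem_setOf_eq] at hw'
          rcases hw' with rfl | rfl
          · exact absurd hwS hu
          · exact absurd hadj (G.irrefl)
        · exact ⟨hw', hadj⟩
      calc ({w ∈ S | G.Adj v w}).ncard ≤ ({w ∈ mVerts M | G.Adj v w}).ncard :=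
            Set.ncard_le_ncard hsub (Set.toFinite _)
        _ ≤ r := by omega
    · -- neither
      refine hM.2 S ?_ hSne
      intro w hw
      rcases hS hw with hw' | hw'
      · simp only [Sym2.mem_iff, Set.mem_setOf_eq] at hw'
        rcases hw' with rfl | rfl
        · exact absurd hw hu
        · exact absurd hw hv
      · exact hw'

end Aux

section Count
variable {V : Type*} [Fintype V] [DecidableEq V] {G : SimpleGraph V} [DecidableRel G.Adj]
  {r Δ : ℕ}

lemma exists_good_color {N : ℕ} (hN : N = 2*(Δ-1)^2/(r+1) + 2*(Δ-1) + 1)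
    (hΔ : 1 ≤ Δ) (hdeg : ∀ v, G.degree v ≤ Δ)
    {u v : V} (huv : G.Adj u v) (P : Fin N → Finset (Sym2 V))
    (hsub : ∀ i, (P i : Set (Sym2 V)) ⊆ G.edgeSet)
    (hne : ∀ i, s(u,v) ∉ P i)
    (hdisjcl : ∀ i j, i ≠ j → Disjoint (P i) (P j)) :
    ∃ i, (∀ f ∈ P i, u ∉ f ∧ v ∉ f) ∧
      ({w ∈ mVerts (P i) | G.Adj u w}).ncard + ({w ∈ mVerts (P i) | G.Adj v w}).ncard ≤ r := by
  classical
  set A : Finset (Fin N) := Finset.univ.filter (fun i => ∃ f ∈ P i, u ∈ f ∨ v ∈ f) with hA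
  set t : Fin N → ℕ := fun i =>
    ((G.neighborFinset u).filter (fun w => w ∈ mVerts (P i))).card +
    ((G.neighborFinset v).filter (fun w => w ∈ mVerts (P i))).card with ht
  set B : Finset (Fin N) := Finset.univ.filter (fun i => i ∉ A ∧ r + 1 ≤ t i) with hB
  -- generic representative-counting bound
  have rep_bound : ∀ (s : Finset (Fin N)) (T : Finset (Sym2 V)),
      (∀ i ∈ s, ((P i) ∩ T).Nonempty) → s.card ≤ T.card := by
    intro s T h
    have hdisj' : ∀ i ∈ s, ∀ j ∈ s, i ≠ j → Disjoint (P i ∩ T) (P j ∩ T) := by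
      intro i _ j _ hij
      exact Finset.disjoint_of_subset_left Finset.inter_subset_left
        (Finset.disjoint_of_subset_right Finset.inter_subset_left (hdisjcl i j hij))
    calc s.card = ∑ i ∈ s, 1 := by simp
      _ ≤ ∑ i ∈ s, (P i ∩ T).card := Finset.sum_le_sum (fun i hi => Finset.card_pos.mpr (h i hi))
      _ = (s.biUnion (fun i => P i ∩ T)).card := (Finset.card_biUnion hdisj').symm
      _ ≤ T.card := Finset.card_le_card
          (Finset.biUnion_subset.mpr (fun i _ => Finset.inter_subset_right))
  have hmemInc : ∀ {x w : V}, G.Adj x w → s(x,w) ∈ G.incidenceFinset x := by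
    intro x w hxw
    rw [G.mem_incidenceFinset]
    exact ⟨hxw, Sym2.mem_mk_left _ _⟩
  -- bound on A
  have cardA : A.card ≤ 2*(Δ-1) := by
    have := rep_bound A ((G.incidenceFinset u).erase s(u,v) ∪ (G.incidenceFinset v).erase s(u,v)) ?_
    · refine le_trans this (le_trans (Finset.card_union_le _ _) ?_)
      rw [Finset.card_erase_of_mem (hmemInc huv),
        Finset.card_erase_of_mem (by rw [Sym2.eq_swap]; exact hmemInc huv.symm),
        SimpleGraph.card_incidenceFinset_eq_degree, SimpleGraph.card_incidenceFinset_eq_degree]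
      have h1 := hdeg u; have h2 := hdeg v
      omega
    · intro i hi
      rw [hA, Finset.mem_filter] at hi
      obtain ⟨-, f, hf, hor⟩ := hi
      refine ⟨f, Finset.mem_inter.mpr ⟨hf, ?_⟩⟩
      have hfe : f ∈ G.edgeSet := hsub i hf
      have hfne : f ≠ s(u,v) := fun h => hne i (h ▸ hf)
      rcases hor with h | h
      · exact Finset.mem_union_left _ (Finset.mem_erase.mpr ⟨hfne,
          (G.mem_incidenceFinset u f).mpr ⟨hfe, h⟩⟩)
      · exact Finset.mem_union_right _ (Finset.mem_erase.mpr ⟨hfne,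
          (G.mem_incidenceFinset v f).mpr ⟨hfe, h⟩⟩)
  -- per-vertex class bound
  have classbound : ∀ x w : V, (x = u ∨ x = v) → G.Adj x w →
      (B.filter (fun i => w ∈ mVerts (P i))).card ≤ Δ - 1 := by
    intro x w hx hxw
    have := rep_bound (B.filter (fun i => w ∈ mVerts (P i))) ((G.incidenceFinset w).erase s(x,w)) ?_
    · refine le_trans this ?_
      rw [Finset.card_erase_of_mem (by rw [Sym2.eq_swap]; exact hmemInc hxw.symm),
        SimpleGraph.card_incidenceFinset_eq_degree]
      have := hdeg w; omega
    · intro i hi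
      rw [Finset.mem_filter] at hi
      obtain ⟨hiB, f, hf, hwf⟩ := hi
      rw [hB, Finset.mem_filter] at hiB
      obtain ⟨-, hiA, -⟩ := hiB
      have hnA : ¬ ∃ f ∈ P i, u ∈ f ∨ v ∈ f := by
        intro hcon
        exact hiA (by rw [hA, Finset.mem_filter]; exact ⟨Finset.mem_univ _, hcon⟩)
      have hxf : x ∉ f := by
        intro hxf
        rcases hx with rfl | rfl
        · exact hnA ⟨f, hf, Or.inl hxf⟩
        · exact hnA ⟨f, hf, Or.inr hxf⟩
      refine ⟨f, Finset.mem_inter.mpr ⟨hf, Finset.mem_erase.mpr ⟨?_, ?_⟩⟩⟩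
      · intro h; exact hxf (h ▸ Sym2.mem_mk_left _ _)
      · exact (G.mem_incidenceFinset w f).mpr ⟨hsub i hf, hwf⟩
  -- sum bound for each side
  have side : ∀ x y : V, G.Adj x y → (x = u ∨ x = v) → (y = u ∨ y = v) →
      ∑ i ∈ B, ((G.neighborFinset x).filter (fun w => w ∈ mVerts (P i))).card
        ≤ (Δ-1)*(Δ-1) := by
    intro x y hxy hx hy
    have hswap : ∑ i ∈ B, ((G.neighborFinset x).filter (fun w => w ∈ mVerts (P i))).card
        = ∑ w ∈ G.neighborFinset x, (B.filter (fun i => w ∈ mVerts (P i))).card := by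
      simp only [Finset.card_filter]
      exact Finset.sum_comm
    have hy0 : (B.filter (fun i => y ∈ mVerts (P i))).card = 0 := by
      rw [Finset.card_eq_zero, Finset.filter_eq_empty_iff]
      intro i hiB hyP
      rw [hB, Finset.mem_filter] at hiB
      obtain ⟨-, hiA, -⟩ := hiB
      obtain ⟨f, hf, hyf⟩ := hyP
      apply hiA
      rw [hA, Finset.mem_filter]
      refine ⟨Finset.mem_univ _, f, hf, ?_⟩
      rcases hy with rfl | rfl
      · exact Or.inl hyf
      · exact Or.inr hyf
    have herase := Finset.sum_erase
      (f := fun w => (Finset.filter (fun i => w ∈ mVerts (P i)) B).card)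
      (G.neighborFinset x) hy0
    rw [hswap, ← herase]
    calc ∑ w ∈ (G.neighborFinset x).erase y, (B.filter (fun i => w ∈ mVerts (P i))).card
        ≤ ∑ w ∈ (G.neighborFinset x).erase y, (Δ-1) := by
          refine Finset.sum_le_sum fun w hw => classbound x w hx ?_
          exact (SimpleGraph.mem_neighborFinset _ _ _).mp (Finset.mem_of_mem_erase hw)
      _ = ((G.neighborFinset x).erase y).card * (Δ-1) := by
          rw [Finset.sum_const, smul_eq_mul]
      _ ≤ (Δ-1)*(Δ-1) := by
          refine Nat.mul_le_mul_right _ ?_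
          rw [Finset.card_erase_of_mem ((SimpleGraph.mem_neighborFinset _ _ _).mpr hxy),
            SimpleGraph.card_neighborFinset_eq_degree]
          have := hdeg x; omega
  have cardB : B.card * (r+1) ≤ 2*((Δ-1)*(Δ-1)) := by
    calc B.card * (r+1) = ∑ _i ∈ B, (r+1) := by rw [Finset.sum_const, smul_eq_mul, mul_comm]
      _ ≤ ∑ i ∈ B, t i := by
          refine Finset.sum_le_sum fun i hi => ?_
          rw [hB, Finset.mem_filter] at hi
          exact hi.2.2
      _ = (∑ i ∈ B, ((G.neighborFinset u).filter (fun w => w ∈ mVerts (P i))).card)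
          + ∑ i ∈ B, ((G.neighborFinset v).filter (fun w => w ∈ mVerts (P i))).card := by
          rw [ht, Finset.sum_add_distrib]
      _ ≤ (Δ-1)*(Δ-1) + (Δ-1)*(Δ-1) :=
          Nat.add_le_add (side u v huv (Or.inl rfl) (Or.inr rfl))
            (side v u huv.symm (Or.inr rfl) (Or.inl rfl))
      _ = 2*((Δ-1)*(Δ-1)) := by ring
  have cardB' : B.card ≤ 2*(Δ-1)^2/(r+1) := by
    rw [Nat.le_div_iff_mul_le (Nat.succ_pos r)]
    calc B.card * (r+1) ≤ 2*((Δ-1)*(Δ-1)) := cardB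
      _ = 2*(Δ-1)^2 := by ring
  have hcard : (A ∪ B).card < N := by
    have := Finset.card_union_le A B
    omega
  have hex : ∃ i, i ∉ A ∪ B := by
    by_contra h
    push_neg at h
    have : A ∪ B = Finset.univ := Finset.eq_univ_iff_forall.mpr h
    rw [this, Finset.card_univ, Fintype.card_fin] at hcard
    omega
  obtain ⟨i, hi⟩ := hex
  rw [Finset.mem_union] at hi
  push_neg at hi
  obtain ⟨hiA, hiB⟩ := hi
  have h1 : ∀ f ∈ P i, u ∉ f ∧ v ∉ f := by
    intro f hf
    constructor <;> intro hc <;> apply hiA <;> rw [hA, Finset.mem_filter]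
    · exact ⟨Finset.mem_univ _, f, hf, Or.inl hc⟩
    · exact ⟨Finset.mem_univ _, f, hf, Or.inr hc⟩
  have h2 : t i ≤ r := by
    by_contra hc
    push_neg at hc
    exact hiB (by rw [hB, Finset.mem_filter]; exact ⟨Finset.mem_univ _, hiA, hc⟩)
  have conv : ∀ x : V, {w ∈ mVerts (P i) | G.Adj x w}.ncard
      = ((G.neighborFinset x).filter (fun w => w ∈ mVerts (P i))).card := by
    intro x
    rw [← Set.ncard_coe_finset]
    congr 1
    ext w
    simp only [Finset.coe_filter, SimpleGraph.mem_neighborFinset, Set.mem_setOf_eq]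
    exact ⟨fun h => ⟨h.2, h.1⟩, fun h => ⟨h.2, h.1⟩⟩
  refine ⟨i, h1, ?_⟩
  rw [conv u, conv v]
  rw [ht] at h2
  exact h2

end Count

section Main
variable {V : Type*} [Fintype V] [DecidableEq V] {G : SimpleGraph V} [DecidableRel G.Adj]
  {r Δ : ℕ}

lemma exists_partition {N : ℕ} (hN : N = 2*(Δ-1)^2/(r+1) + 2*(Δ-1) + 1)
    (hr : 1 ≤ r) (hΔ : 1 ≤ Δ) (hdeg : ∀ v, G.degree v ≤ Δ) (s : Finset (Sym2 V)) :
    s ⊆ G.edgeFinset → ∃ P : Fin N → Finset (Sym2 V),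
      (∀ i, IsDegMatching G r (P i)) ∧ (∀ e ∈ s, ∃! i, e ∈ P i) ∧ (∀ i, P i ⊆ s) := by
  induction s using Finset.strongInduction with
  | _ s IH =>
  intro hs
  rcases Finset.eq_empty_or_nonempty s with rfl | ⟨e, he⟩
  · exact ⟨fun _ => ∅, fun _ => isDegMatching_empty, by simp, by simp⟩
  obtain ⟨⟨u, v⟩, rfl⟩ := e.exists_rep
  have huv : G.Adj u v := by
    rw [← SimpleGraph.mem_edgeSet]
    exact (SimpleGraph.mem_edgeFinset).mp (hs he)
  obtain ⟨P, hP1, hP2, hP3⟩ := IH (s.erase s(u,v)) (Finset.erase_ssubset he)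
    ((Finset.erase_subset _ _).trans hs)
  have hsub : ∀ i, (P i : Set (Sym2 V)) ⊆ G.edgeSet := fun i => (hP1 i).1.1
  have hne : ∀ i, s(u,v) ∉ P i := fun i h =>
    (Finset.mem_erase.mp (hP3 i h)).1 rfl
  have hdisjcl : ∀ i j, i ≠ j → Disjoint (P i) (P j) := by
    intro i j hij
    rw [Finset.disjoint_left]
    intro f hfi hfj
    obtain ⟨k, -, hk⟩ := hP2 f (hP3 i hfi)
    exact hij ((hk i hfi).trans (hk j hfj).symm)
  obtain ⟨i₀, hgood1, hgood2⟩ := exists_good_color hN hΔ hdeg huv P hsub hne hdisjcl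
  refine ⟨fun i => if i = i₀ then insert s(u,v) (P i₀) else P i, ?_, ?_, ?_⟩
  · intro i
    show IsDegMatching G r (if i = i₀ then insert s(u,v) (P i₀) else P i)
    by_cases hi : i = i₀
    · rw [if_pos hi]
      exact insert_isDegMatching huv (hP1 i₀) hgood1 hgood2 hr
    · rw [if_neg hi]
      exact hP1 i
  · intro e' he'
    by_cases he'e : e' = s(u,v)
    · subst he'e
      refine ⟨i₀, ?_, ?_⟩
      · show s(u,v) ∈ if i₀ = i₀ then insert s(u,v) (P i₀) else P i₀
        rw [if_pos rfl]
        exact Finset.mem_insert_self _ _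
      · intro j hj
        have hj' : s(u,v) ∈ if j = i₀ then insert s(u,v) (P i₀) else P j := hj
        by_contra hji
        rw [if_neg hji] at hj'
        exact (Finset.mem_erase.mp (hP3 j hj')).1 rfl
    · obtain ⟨k, hk, huniq⟩ := hP2 e' (Finset.mem_erase.mpr ⟨he'e, he'⟩)
      refine ⟨k, ?_, ?_⟩
      · show e' ∈ if k = i₀ then insert s(u,v) (P i₀) else P k
        by_cases hk0 : k = i₀
        · subst hk0
          rw [if_pos rfl]
          exact Finset.mem_insert_of_mem hk
        · rw [if_neg hk0]
          exact hk
      · intro j hj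
        have hj' : e' ∈ if j = i₀ then insert s(u,v) (P i₀) else P j := hj
        by_cases hj0 : j = i₀
        · subst hj0
          rw [if_pos rfl, Finset.mem_insert] at hj'
          rcases hj' with h | h
          · exact absurd h he'e
          · exact huniq _ h
        · rw [if_neg hj0] at hj'
          exact huniq j hj'
  · intro i
    show (if i = i₀ then insert s(u,v) (P i₀) else P i) ⊆ s
    by_cases hi : i = i₀
    · rw [if_pos hi]
      exact Finset.insert_subset he ((hP3 i₀).trans (Finset.erase_subset _ _))
    · rw [if_neg hi]
      exact (hP3 i).trans (Finset.erase_subset _ _)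

end Main

/-- **Theorem 1.** If `r ≥ 1` and `G` is a graph of maximum degree at most `Δ`, then
`χ'_r(G) ≤ 2(Δ-1)²/(r+1) + 2(Δ-1) + 1`. -/
theorem degChromIndex_le {V : Type*} [Fintype V] (G : SimpleGraph V) [DecidableRel G.Adj]
    (r Δ : ℕ) (hr : 1 ≤ r) (hΔ : 1 ≤ Δ) (hdeg : ∀ v, G.degree v ≤ Δ) :
    (degChromIndex G r : ℝ) ≤
      2 * ((Δ : ℝ) - 1) ^ 2 / ((r : ℝ) + 1) + 2 * ((Δ : ℝ) - 1) + 1 := by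
  classical
  set N : ℕ := 2*(Δ-1)^2/(r+1) + 2*(Δ-1) + 1 with hN
  have hle : degChromIndex G r ≤ N := by
    apply Nat.sInf_le
    obtain ⟨P, h1, h2, -⟩ := exists_partition hN hr hΔ hdeg G.edgeFinset subset_rfl
    exact ⟨P, h1, fun e he => h2 e (SimpleGraph.mem_edgeFinset.mpr he)⟩
  have hΔcast : ((Δ - 1 : ℕ) : ℝ) = (Δ : ℝ) - 1 := by
    rw [Nat.cast_sub hΔ]; norm_num
  calc (degChromIndex G r : ℝ) ≤ (N : ℝ) := Nat.cast_le.mpr hle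
    _ = ((2*(Δ-1)^2/(r+1) : ℕ) : ℝ) + ((2*(Δ-1) : ℕ) : ℝ) + 1 := by
        rw [hN]; push_cast; ring
    _ ≤ 2 * ((Δ : ℝ) - 1) ^ 2 / ((r : ℝ) + 1) + 2 * ((Δ : ℝ) - 1) + 1 := by
        have h1 : ((2*(Δ-1)^2/(r+1) : ℕ) : ℝ) ≤ 2 * ((Δ : ℝ) - 1) ^ 2 / ((r : ℝ) + 1) := by
          refine le_trans (Nat.cast_div_le) ?_
          push_cast [hΔcast]
          norm_num
        have h2 : ((2*(Δ-1) : ℕ) : ℝ) = 2 * ((Δ : ℝ) - 1) := by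
          push_cast [hΔcast]
          ring
        linarith
end

section
/- If G is a finite simple graph of maximum degree at most Δ (Δ a positive integer), then the 1-degenerate (acyclic) chromatic index of G satisfies χ'_1(G) ≤ Δ². -/
variable {V : Type*}

/-- A `1`-degenerate (acyclic) matching: a matching `M` such that `G[V(M)]` is a forest. -/
def IsAcyclicMatching (G : SimpleGraph V) (M : Finset (Sym2 V)) : Prop :=
  IsMatching G M ∧ (G.induce (mVerts M)).IsAcyclic

/-- The `1`-degenerate (acyclic) chromatic index `χ'_1(G)`: the minimum number of parts
in a partition of the edge set of `G` into acyclic matchings. -/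
noncomputable def acyclicChromIndex (G : SimpleGraph V) : ℕ :=
  sInf {n | ∃ P : Fin n → Finset (Sym2 V),
    (∀ i, IsAcyclicMatching G (P i)) ∧ ∀ e ∈ G.edgeSet, ∃! i, e ∈ P i}

/-!
Greedy colouring with `Δ²` colours. When the edge `uv` is to be coloured, a colour class `M` is
unusable only if `u` or `v` is already covered by `M` (at most `2(Δ - 1)` colours, one per
coloured edge at `u` or `v`), or if adding `u` and `v` to the forest `G[V(M)]` closes a cycle.
Since a vertex with at most one neighbour lies on no cycle, in the latter case `u` and `v`
together have at least two neighbours in `V(M)`. A neighbour `w ≠ v` of `u` lies in `V(M)` for at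
most `Δ - 1` of these colours, since `M` then covers `w` by an edge other than `wu`; likewise for
`v`. Double counting over the at most `2(Δ - 1)` such neighbours bounds the number of these
colours by `(Δ - 1)²`. In total at most `Δ² - 1` colours are excluded.
-/

open SimpleGraph Finset

section InducedForest

variable {G : SimpleGraph V}

theorem isAcyclic_induce_iff {s : Set V} :
    (G.induce s).IsAcyclic ↔ ∀ ⦃v : V⦄ (c : G.Walk v v), c.IsCycle → ∃ w ∈ c.support, w ∉ s := by
  have hinj : Function.Injective (Embedding.induce (G := G) s).toHom := Subtype.val_injective
  constructor
  · intro h v c hc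
    by_contra! hs
    refine h (c.induce s hs) ?_
    rwa [← Walk.isCycle_map_iff_of_injective hinj, Walk.map_induce]
  · rintro h ⟨v, hv⟩ c hc
    obtain ⟨w, hw, hws⟩ := h _ (hc.map hinj)
    obtain ⟨x, -, rfl⟩ := List.mem_map.mp (by simpa only [Walk.support_map] using hw)
    exact hws x.2

theorem isAcyclic_induce_insert {x : V} [Fintype (G.neighborSet x)] {s : Set V}
    [DecidablePred (· ∈ s)] (hs : (G.induce s).IsAcyclic)
    (hx : #{w ∈ G.neighborFinset x | w ∈ s} ≤ 1) : (G.induce (insert x s)).IsAcyclic := by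
  classical
  rw [isAcyclic_induce_iff] at hs ⊢
  intro v c hc
  by_cases hxc : x ∈ c.support
  · by_contra! hcs
    -- rotated to start at `x`, the cycle leaves `x` and returns to it through two distinct
    -- neighbours, both of which lie in `s`
    have hd := hc.rotate hxc
    have mem_s : ∀ y ∈ (c.rotate x hxc).support, G.Adj x y →
        y ∈ ({w ∈ G.neighborFinset x | w ∈ s} : Finset V) := fun y hy hxy ↦
      mem_filter.mpr ⟨(G.mem_neighborFinset x y).mpr hxy,
        (hcs y ((Walk.mem_support_rotate_iff c x hxc).mp hy)).resolve_left hxy.ne'⟩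
    exact hd.snd_ne_penultimate (card_le_one.mp hx _
      (mem_s _ (Walk.getVert_mem_support _ _) (Walk.adj_snd hd.not_nil)) _
      (mem_s _ (Walk.getVert_mem_support _ _) (Walk.adj_penultimate hd.not_nil).symm))
  · obtain ⟨w, hw, hws⟩ := hs c hc
    exact ⟨w, hw, by rintro (rfl | h) <;> contradiction⟩

variable [Fintype V] [DecidableRel G.Adj] {s : Set V} [DecidablePred (· ∈ s)]
  {u v : V}

theorem isAcyclic_induce_insert_insert (hs : (G.induce s).IsAcyclic)
    (hu : #{w ∈ G.neighborFinset u | w ∈ s} = 0) (hv : #{w ∈ G.neighborFinset v | w ∈ s} ≤ 1) :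
    (G.induce (insert u (insert v s))).IsAcyclic := by
  classical
  rw [card_eq_zero, filter_eq_empty_iff] at hu
  have only_v : ∀ w ∈ {w ∈ G.neighborFinset u | w ∈ insert v s}, w = v := fun w hw ↦
    ((mem_filter.mp hw).2).resolve_right (hu (mem_filter.mp hw).1)
  exact isAcyclic_induce_insert (isAcyclic_induce_insert hs hv)
    (card_le_one.mpr fun a ha b hb ↦ (only_v a ha).trans (only_v b hb).symm)

theorem two_le_card_neighborFinset_filter_add_of_not_isAcyclic (hs : (G.induce s).IsAcyclic)
    (h : ¬ (G.induce (insert u (insert v s))).IsAcyclic) :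
    2 ≤ #{w ∈ G.neighborFinset u | w ∈ s} + #{w ∈ G.neighborFinset v | w ∈ s} := by
  by_contra! hlt
  apply h
  obtain hu | hu := Nat.eq_zero_or_pos #{w ∈ G.neighborFinset u | w ∈ s}
  · exact isAcyclic_induce_insert_insert hs hu (by omega)
  · rw [Set.insert_comm]
    exact isAcyclic_induce_insert_insert hs (by omega) (by omega)

end InducedForest

theorem isAcyclicMatching_empty (G : SimpleGraph V) : IsAcyclicMatching G ∅ := by
  refine ⟨⟨by simp, by simp⟩, ?_⟩
  have : IsEmpty (mVerts (∅ : Finset (Sym2 V))) := ⟨fun ⟨_, e, he, _⟩ ↦ by simp at he⟩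
  exact IsAcyclic.of_subsingleton

section Matching

variable {G : SimpleGraph V} [DecidableEq V] {M : Finset (Sym2 V)} {u v : V}

theorem mVerts_insert_s1 : mVerts (insert s(u, v) M) = insert u (insert v (mVerts M)) := by
  ext w
  simp [mVerts, or_and_right, exists_or, eq_comm, or_assoc]

theorem isMatching_insert (hM : IsMatching G M) (huv : G.Adj u v) (hu : u ∉ mVerts M)
    (hv : v ∉ mVerts M) : IsMatching G (insert s(u, v) M) := by
  have fresh : ∀ f ∈ M, ∀ w ∈ s(u, v), w ∉ f := by
    rintro f hf w hw hwf
    rcases Sym2.mem_iff.mp hw with rfl | rfl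
    exacts [hu ⟨f, hf, hwf⟩, hv ⟨f, hf, hwf⟩]
  refine ⟨by simpa [Set.insert_subset_iff] using ⟨huv, hM.1⟩, ?_⟩
  intro e he f hf hef w hwe hwf
  rcases mem_insert.mp he with rfl | he <;> rcases mem_insert.mp hf with rfl | hf
  · exact hef rfl
  · exact fresh f hf w hwe hwf
  · exact fresh e he w hwf hwe
  · exact hM.2 e he f hf hef w hwe hwf

theorem isAcyclicMatching_insert (hM : IsMatching G M) (huv : G.Adj u v)
    (hu : u ∉ mVerts M) (hv : v ∉ mVerts M)
    (hacyc : (G.induce (insert u (insert v (mVerts M)))).IsAcyclic) :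
    IsAcyclicMatching G (insert s(u, v) M) :=
  ⟨isMatching_insert hM huv hu hv, by rwa [mVerts_insert_s1]⟩

end Matching

section EdgeColoring

variable {ι : Type*} [DecidableEq ι]

def colorClass (E : Finset (Sym2 V)) (c : Sym2 V → ι) (i : ι) : Finset (Sym2 V) :=
  {e ∈ E | c e = i}

@[simp]
theorem mem_colorClass {E : Finset (Sym2 V)} {c : Sym2 V → ι} {i : ι} {e : Sym2 V} :
    e ∈ colorClass E c i ↔ e ∈ E ∧ c e = i :=
  mem_filter

variable [DecidableEq V] {E : Finset (Sym2 V)} {c : Sym2 V → ι} {e : Sym2 V}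

theorem colorClass_insert_update_self (i : ι) :
    colorClass (insert e E) (Function.update c e i) i = insert e (colorClass E c i) := by
  ext f
  by_cases hf : f = e <;> simp [hf]

theorem colorClass_insert_update_of_ne (he : e ∉ E) {i j : ι} (hji : j ≠ i) :
    colorClass (insert e E) (Function.update c e i) j = colorClass E c j := by
  ext f
  by_cases hf : f = e
  · simp [hf, he, hji.symm]
  · simp [hf]

end EdgeColoring

section GreedyColoring

open scoped Classical

variable {G : SimpleGraph V} [Fintype V] [DecidableRel G.Adj] [DecidableEq V]
  {ι : Type*} [DecidableEq ι] {E : Finset (Sym2 V)} {c : Sym2 V → ι} {Δ : ℕ} {u v : V}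

theorem card_filter_mem_mVerts_colorClass_le (hE : ↑E ⊆ G.edgeSet) (c : Sym2 V → ι) {w : V}
    {g : Sym2 V} (hg : g ∈ G.incidenceSet w) {I : Finset ι}
    (hI : ∀ i ∈ I, g ∉ colorClass E c i) :
    #{i ∈ I | w ∈ mVerts (colorClass E c i)} ≤ G.degree w - 1 :=
  calc #{i ∈ I | w ∈ mVerts (colorClass E c i)}
      ≤ #(((G.incidenceFinset w).erase g).image c) := by
        refine card_le_card fun i hi ↦ ?_
        obtain ⟨hiI, f, hf, hwf⟩ := mem_filter.mp hi
        obtain ⟨hfE, rfl⟩ := mem_colorClass.mp hf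
        refine mem_image.mpr ⟨f, mem_erase.mpr ⟨?_, ?_⟩, rfl⟩
        · rintro rfl
          exact hI _ hiI hf
        · exact (G.mem_incidenceFinset w f).mpr ⟨hE hfE, hwf⟩
    _ ≤ #((G.incidenceFinset w).erase g) := card_image_le
    _ = G.degree w - 1 := by
        rw [card_erase_of_mem ((G.mem_incidenceFinset w g).mpr hg),
          card_incidenceFinset_eq_degree]

theorem sum_card_neighborFinset_filter_mem_mVerts_le (hE : ↑E ⊆ G.edgeSet)
    (hdeg : ∀ w, G.degree w ≤ Δ) (huv : G.Adj u v) {B : Finset ι}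
    (hB : ∀ i ∈ B, u ∉ mVerts (colorClass E c i) ∧ v ∉ mVerts (colorClass E c i)) :
    ∑ i ∈ B, #{w ∈ G.neighborFinset u | w ∈ mVerts (colorClass E c i)} ≤ (Δ - 1) * (Δ - 1) := by
  set N := (G.neighborFinset u).erase v
  have hN : #N ≤ Δ - 1 := by
    rw [card_erase_of_mem ((G.mem_neighborFinset u v).mpr huv), card_neighborFinset_eq_degree]
    exact Nat.sub_le_sub_right (hdeg u) 1
  have few_colors : ∀ w ∈ N, #{i ∈ B | w ∈ mVerts (colorClass E c i)} ≤ Δ - 1 := by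
    intro w hw
    have hwu : G.Adj w u := ((G.mem_neighborFinset u w).mp (mem_of_mem_erase hw)).symm
    refine (card_filter_mem_mVerts_colorClass_le hE c (g := s(w, u))
      ((G.mem_incidenceSet w u).mpr hwu) fun i hi hwui ↦ ?_).trans
      (Nat.sub_le_sub_right (hdeg w) 1)
    exact (hB i hi).1 ⟨s(w, u), hwui, by simp⟩
  calc ∑ i ∈ B, #{w ∈ G.neighborFinset u | w ∈ mVerts (colorClass E c i)}
      = ∑ i ∈ B, #{w ∈ N | w ∈ mVerts (colorClass E c i)} := by
        refine sum_congr rfl fun i hi ↦ ?_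
        rw [filter_erase, erase_eq_of_notMem (by simp [(hB i hi).2])]
    _ = ∑ w ∈ N, #{i ∈ B | w ∈ mVerts (colorClass E c i)} :=
        sum_card_bipartiteAbove_eq_sum_card_bipartiteBelow _
    _ ≤ ∑ _w ∈ N, (Δ - 1) := sum_le_sum few_colors
    _ ≤ (Δ - 1) * (Δ - 1) := by
        rw [sum_const, smul_eq_mul]
        exact Nat.mul_le_mul_right _ hN

variable [Fintype ι]

theorem card_filter_not_isAcyclic_induce_le (hE : ↑E ⊆ G.edgeSet)
    (hc : ∀ i, IsAcyclicMatching G (colorClass E c i)) (hdeg : ∀ w, G.degree w ≤ Δ)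
    (huv : G.Adj u v) :
    #{i | u ∉ mVerts (colorClass E c i) ∧ v ∉ mVerts (colorClass E c i) ∧
      ¬ (G.induce (insert u (insert v (mVerts (colorClass E c i))))).IsAcyclic} ≤
      (Δ - 1) * (Δ - 1) := by
  set B : Finset ι := {i | u ∉ mVerts (colorClass E c i) ∧ v ∉ mVerts (colorClass E c i) ∧
    ¬ (G.induce (insert u (insert v (mVerts (colorClass E c i))))).IsAcyclic}
  have hB : ∀ i ∈ B, u ∉ mVerts (colorClass E c i) ∧ v ∉ mVerts (colorClass E c i) :=
    fun i hi ↦ by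
      simp only [B, mem_filter, mem_univ, true_and] at hi
      exact ⟨hi.1, hi.2.1⟩
  have : 2 * #B ≤ 2 * ((Δ - 1) * (Δ - 1)) :=
    calc 2 * #B = ∑ _i ∈ B, 2 := by rw [sum_const, smul_eq_mul, mul_comm]
      _ ≤ ∑ i ∈ B, (#{w ∈ G.neighborFinset u | w ∈ mVerts (colorClass E c i)} +
          #{w ∈ G.neighborFinset v | w ∈ mVerts (colorClass E c i)}) :=
        sum_le_sum fun i hi ↦ by
          simp only [B, mem_filter, mem_univ, true_and] at hi
          exact two_le_card_neighborFinset_filter_add_of_not_isAcyclic (hc i).2 hi.2.2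
      _ ≤ (Δ - 1) * (Δ - 1) + (Δ - 1) * (Δ - 1) := by
        rw [sum_add_distrib]
        exact add_le_add (sum_card_neighborFinset_filter_mem_mVerts_le hE hdeg huv hB)
          (sum_card_neighborFinset_filter_mem_mVerts_le hE hdeg huv.symm
            fun i hi ↦ (hB i hi).symm)
      _ = 2 * ((Δ - 1) * (Δ - 1)) := (two_mul _).symm
  omega

theorem card_filter_mem_mVerts_colorClass_le_of_notMem (hE : ↑E ⊆ G.edgeSet)
    (hdeg : ∀ w, G.degree w ≤ Δ) (huv : G.Adj u v) (he : s(u, v) ∉ E) :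
    #{i | u ∈ mVerts (colorClass E c i)} ≤ Δ - 1 :=
  (card_filter_mem_mVerts_colorClass_le hE c ((G.mem_incidenceSet u v).mpr huv)
    fun _ _ h ↦ he (mem_colorClass.mp h).1).trans (Nat.sub_le_sub_right (hdeg u) 1)

theorem card_filter_not_isAcyclicMatching_insert_lt (hE : ↑E ⊆ G.edgeSet)
    (hc : ∀ i, IsAcyclicMatching G (colorClass E c i)) (hdeg : ∀ w, G.degree w ≤ Δ)
    (huv : G.Adj u v) (he : s(u, v) ∉ E) :
    #{i | ¬ IsAcyclicMatching G (insert s(u, v) (colorClass E c i))} < Δ ^ 2 := by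
  have hΔ : 0 < Δ := ((G.degree_pos_iff_exists_adj u).mpr ⟨v, huv⟩).trans_le (hdeg u)
  have hsplit : ({i | ¬ IsAcyclicMatching G (insert s(u, v) (colorClass E c i))} : Finset ι) ⊆
      ({i | u ∈ mVerts (colorClass E c i)} : Finset ι) ∪
      ({i | v ∈ mVerts (colorClass E c i)} : Finset ι) ∪
      ({i | u ∉ mVerts (colorClass E c i) ∧ v ∉ mVerts (colorClass E c i) ∧
        ¬ (G.induce (insert u (insert v (mVerts (colorClass E c i))))).IsAcyclic} : Finset ι) := by
    intro i hi
    simp only [mem_filter, mem_univ, true_and, mem_union] at hi ⊢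
    by_contra! h
    exact hi (isAcyclicMatching_insert (hc i).1 huv h.1.1 h.1.2 (h.2 h.1.1 h.1.2))
  have hv : #{i | v ∈ mVerts (colorClass E c i)} ≤ Δ - 1 :=
    card_filter_mem_mVerts_colorClass_le_of_notMem hE hdeg huv.symm (by rwa [Sym2.eq_swap])
  calc _ ≤ _ := card_le_card hsplit
    _ ≤ _ := (card_union_le _ _).trans (add_le_add_left (card_union_le _ _) _)
    _ ≤ (Δ - 1) + (Δ - 1) + (Δ - 1) * (Δ - 1) :=
      add_le_add (add_le_add (card_filter_mem_mVerts_colorClass_le_of_notMem hE hdeg huv he) hv)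
        (card_filter_not_isAcyclic_induce_le hE hc hdeg huv)
    _ < Δ ^ 2 := by
      obtain ⟨d, rfl⟩ := Nat.exists_eq_add_of_lt hΔ
      simp only [zero_add, Nat.add_sub_cancel]
      nlinarith

theorem exists_isAcyclicMatching_insert_colorClass (hι : Δ ^ 2 ≤ Fintype.card ι)
    (hE : ↑E ⊆ G.edgeSet) (hc : ∀ i, IsAcyclicMatching G (colorClass E c i))
    (hdeg : ∀ w, G.degree w ≤ Δ) (huv : G.Adj u v) (he : s(u, v) ∉ E) :
    ∃ i, IsAcyclicMatching G (insert s(u, v) (colorClass E c i)) := by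
  obtain ⟨i, -, hi⟩ := exists_mem_notMem_of_card_lt_card
    ((card_filter_not_isAcyclicMatching_insert_lt hE hc hdeg huv he).trans_le hι)
  exact ⟨i, by simpa using hi⟩

end GreedyColoring

theorem exists_coloring_forall_isAcyclicMatching_colorClass {G : SimpleGraph V} [Fintype V]
    [DecidableRel G.Adj] [DecidableEq V] {ι : Type*} [Fintype ι] [DecidableEq ι] [Nonempty ι]
    {Δ : ℕ} (hι : Δ ^ 2 ≤ Fintype.card ι) (hdeg : ∀ w, G.degree w ≤ Δ)
    (E : Finset (Sym2 V)) (hE : ↑E ⊆ G.edgeSet) :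
    ∃ c : Sym2 V → ι, ∀ i, IsAcyclicMatching G (colorClass E c i) := by
  induction E using Finset.induction_on with
  | empty =>
    exact ⟨fun _ ↦ Classical.arbitrary ι, fun _ ↦ by
      simpa [colorClass] using isAcyclicMatching_empty G⟩
  | insert e E he ih =>
    obtain ⟨c, hc⟩ := ih ((coe_subset.mpr (subset_insert e E)).trans hE)
    induction e using Sym2.ind with | _ u v => ?_
    obtain ⟨i, hi⟩ := exists_isAcyclicMatching_insert_colorClass hι
      ((coe_subset.mpr (subset_insert _ E)).trans hE) hc hdeg (hE (mem_insert_self _ E)) he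
    refine ⟨Function.update c s(u, v) i, fun j ↦ ?_⟩
    obtain rfl | hji := eq_or_ne j i
    · rwa [colorClass_insert_update_self]
    · rw [colorClass_insert_update_of_ne he hji]
      exact hc j

/-- If `G` is a graph of maximum degree at most `Δ ≥ 1`, then `χ'_1(G) ≤ Δ²`. -/
theorem acyclicChromIndex_le_sq {V : Type*} [Fintype V] (G : SimpleGraph V)
    [DecidableRel G.Adj] (Δ : ℕ) (hΔ : 1 ≤ Δ) (hdeg : ∀ v, G.degree v ≤ Δ) :
    acyclicChromIndex G ≤ Δ ^ 2 := by
  classical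
  have : Nonempty (Fin (Δ ^ 2)) := ⟨⟨0, pow_pos hΔ 2⟩⟩
  obtain ⟨c, hc⟩ := exists_coloring_forall_isAcyclicMatching_colorClass (ι := Fin (Δ ^ 2))
    (by simp) hdeg G.edgeFinset (by simp)
  refine Nat.sInf_le ⟨colorClass G.edgeFinset c, hc, fun e he ↦ ⟨c e, ?_, fun i hi ↦ ?_⟩⟩
  · simpa using he
  · exact (mem_colorClass.mp hi).2.symm
end

section
/- Every acyclic matching in a finite simple graph G is a uniquely restricted matching; that is, if the subgraph of G induced by V(M) is a forest, then there is no matching M' in G with M' ≠ M and V(M') = V(M). -/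
variable {V : Type*}

/-- In a path, at most one edge is incident to the starting vertex. -/
lemma edge_at_start_unique {W : Type*} {F : SimpleGraph W} {u v w1 w2 : W}
    (p : F.Walk u v) (hp : p.IsPath) (h1 : s(u, w1) ∈ p.edges)
    (h2 : s(u, w2) ∈ p.edges) : w1 = w2 := by
  cases p with
  | nil => simp at h1
  | cons h q =>
    rw [SimpleGraph.Walk.cons_isPath_iff] at hp
    rw [SimpleGraph.Walk.edges_cons, List.mem_cons] at h1 h2
    rcases h1 with h1 | h1
    · rcases h2 with h2 | h2
      · rw [← h2] at h1
        exact Sym2.congr_right.mp h1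
      · exact absurd (SimpleGraph.Walk.fst_mem_support_of_mem_edges q h2) hp.2
    · exact absurd (SimpleGraph.Walk.fst_mem_support_of_mem_edges q h1) hp.2

/-- If every vertex of a set `D` has two distinct neighbors in `D`, then an acyclic graph
gives arbitrarily long paths, by the maximal path argument. -/
lemma exists_long_path {W : Type*} {F : SimpleGraph W} (hF : F.IsAcyclic) (D : Set W)
    (h2 : ∀ v ∈ D, ∃ w1 w2, w1 ∈ D ∧ w2 ∈ D ∧ w1 ≠ w2 ∧ F.Adj v w1 ∧ F.Adj v w2)
    {v0 : W} (hv0 : v0 ∈ D) (n : ℕ) :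
    ∃ (u v : W) (p : F.Walk u v), p.IsPath ∧ p.length = n ∧ ∀ x ∈ p.support, x ∈ D := by
  classical
  induction n with
  | zero => exact ⟨v0, v0, SimpleGraph.Walk.nil, by simp, rfl, by simp [hv0]⟩
  | succ n ih =>
    obtain ⟨u, v, p, hp, hlen, hsup⟩ := ih
    have hu : u ∈ D := hsup u p.start_mem_support
    obtain ⟨w1, w2, hw1, hw2, hne, ha1, ha2⟩ := h2 u hu
    -- helper that extends the path if w ∉ support
    have ext : ∀ w, w ∈ D → F.Adj u w → w ∉ p.support →
        ∃ (u' v' : W) (p' : F.Walk u' v'), p'.IsPath ∧ p'.length = n + 1 ∧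
          ∀ x ∈ p'.support, x ∈ D := by
      intro w hwD hadj hws
      refine ⟨w, v, SimpleGraph.Walk.cons hadj.symm p, ?_, by simp [hlen], ?_⟩
      · rw [SimpleGraph.Walk.cons_isPath_iff]; exact ⟨hp, hws⟩
      · intro x hx
        rw [SimpleGraph.Walk.support_cons, List.mem_cons] at hx
        rcases hx with rfl | hx
        · exact hwD
        · exact hsup x hx
    by_cases hs1 : w1 ∈ p.support
    · by_cases hs2 : w2 ∈ p.support
      · -- both on the path: we get a cycle, contradicting acyclicity
        exfalso
        have key : ∀ w, F.Adj u w → w ∈ p.support → s(u, w) ∉ p.edges → False := by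
          intro w hadj hws hnot
          have hq : (p.takeUntil w hws).IsPath := hp.takeUntil hws
          have hc : (SimpleGraph.Walk.cons hadj (p.takeUntil w hws).reverse).IsCycle := by
            rw [SimpleGraph.Walk.cons_isCycle_iff]
            refine ⟨hq.reverse, ?_⟩
            rw [SimpleGraph.Walk.edges_reverse, List.mem_reverse]
            intro hmem
            exact hnot (SimpleGraph.Walk.edges_takeUntil_subset p hws hmem)
          exact hF _ hc
        by_cases he1 : s(u, w1) ∈ p.edges
        · by_cases he2 : s(u, w2) ∈ p.edges
          · exact hne (edge_at_start_unique p hp he1 he2)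
          · exact key w2 ha2 hs2 he2
        · exact key w1 ha1 hs1 he1
      · exact ext w2 hw2 ha2 hs2
    · exact ext w1 hw1 ha1 hs1

/-- Every acyclic matching is uniquely restricted: if the subgraph of `G` induced by
`V(M)` is a forest, then there is no matching `M' ≠ M` in `G` with `V(M') = V(M)`. -/
theorem acyclicMatching_uniquelyRestricted {V : Type*} [Fintype V] (G : SimpleGraph V)
    (M : Finset (Sym2 V)) (hM : IsMatching G M)
    (hac : (G.induce (mVerts M)).IsAcyclic) :
    ¬ ∃ M' : Finset (Sym2 V), IsMatching G M' ∧ M' ≠ M ∧ mVerts M' = mVerts M := by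
  classical
  rintro ⟨M', hM', hne, hV⟩
  -- uniqueness of the matching edge at a vertex
  have uniqM : ∀ {e f : Sym2 V} {v : V}, e ∈ M → f ∈ M → v ∈ e → v ∈ f → e = f := by
    intro e f v he hf hve hvf
    by_contra h
    exact hM.2 e he f hf h v hve hvf
  have uniqM' : ∀ {e f : Sym2 V} {v : V}, e ∈ M' → f ∈ M' → v ∈ e → v ∈ f → e = f := by
    intro e f v he hf hve hvf
    by_contra h
    exact hM'.2 e he f hf h v hve hvf
  -- the set of vertices whose M-edge and M'-edge differ
  set D : Set V := {v | ∃ e ∈ M, ∃ f ∈ M', v ∈ e ∧ v ∈ f ∧ e ≠ f} with hDdef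
  have hDsub : ∀ v ∈ D, v ∈ mVerts M := by
    rintro v ⟨e, he, f, hf, hve, hvf, hef⟩
    exact ⟨e, he, hve⟩
  -- there is an edge in M' \ M
  have hex : ∃ e ∈ M', e ∉ M := by
    by_contra h
    push_neg at h
    apply hne
    refine Finset.Subset.antisymm h ?_
    intro e he
    induction e using Sym2.ind with
    | _ x y =>
      have hx : x ∈ mVerts M := ⟨s(x, y), he, by simp⟩
      rw [← hV] at hx
      obtain ⟨f, hf, hxf⟩ := hx
      have : f = s(x, y) := uniqM (h f hf) he hxf (by simp)
      rwa [← this]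
  -- D is nonempty
  obtain ⟨e, he', heM⟩ := hex
  have hDne : ∃ v0, v0 ∈ D := by
    induction e using Sym2.ind with
    | _ x y =>
      have hx : x ∈ mVerts M := by
        rw [← hV]; exact ⟨s(x, y), he', by simp⟩
      obtain ⟨e₀, he₀, hxe₀⟩ := hx
      exact ⟨x, e₀, he₀, s(x, y), he', hxe₀, by simp, fun h => heM (h ▸ he₀)⟩
  obtain ⟨v0, hv0⟩ := hDne
  -- every vertex of D has two distinct neighbors in D
  have hnbr : ∀ v ∈ D, ∃ a b, a ∈ D ∧ b ∈ D ∧ a ≠ b ∧ G.Adj v a ∧ G.Adj v b := by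
    rintro v ⟨e, he, f, hf, hve, hvf, hef⟩
    obtain ⟨a, rfl⟩ := Sym2.mem_iff_exists.mp hve
    obtain ⟨b, rfl⟩ := Sym2.mem_iff_exists.mp hvf
    have hab : a ≠ b := fun h => hef (by rw [h])
    have hadja : G.Adj v a := hM.1 he
    have hadjb : G.Adj v b := hM'.1 hf
    have haD : a ∈ D := by
      have ha : a ∈ mVerts M := ⟨s(v, a), he, by simp⟩
      rw [← hV] at ha
      obtain ⟨f', hf', haf'⟩ := ha
      refine ⟨s(v, a), he, f', hf', by simp, haf', ?_⟩
      intro hh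
      exact hef (uniqM' (hh ▸ hf') hf (by simp) hvf)
    have hbD : b ∈ D := by
      have hb : b ∈ mVerts M := by
        rw [← hV]; exact ⟨s(v, b), hf, by simp⟩
      obtain ⟨e', he'', hbe'⟩ := hb
      refine ⟨e', he'', s(v, b), hf, hbe', by simp, ?_⟩
      intro hh
      exact hef (uniqM he (hh ▸ he'') hve (by simp))
    exact ⟨a, b, haD, hbD, hab, hadja, hadjb⟩
  -- lift to the induced graph on mVerts M
  haveI : Fintype ↥(mVerts M) := Set.Finite.fintype (Set.toFinite _)
  set D' : Set ↥(mVerts M) := {x | ↑x ∈ D} with hD'def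
  have h2' : ∀ x ∈ D', ∃ w1 w2, w1 ∈ D' ∧ w2 ∈ D' ∧ w1 ≠ w2 ∧
      (G.induce (mVerts M)).Adj x w1 ∧ (G.induce (mVerts M)).Adj x w2 := by
    rintro ⟨v, hv⟩ hvD
    obtain ⟨a, b, haD, hbD, hab, hadja, hadjb⟩ := hnbr v hvD
    refine ⟨⟨a, hDsub a haD⟩, ⟨b, hDsub b hbD⟩, haD, hbD, ?_, ?_, ?_⟩
    · intro h
      exact hab (congrArg Subtype.val h)
    · exact hadja
    · exact hadjb
  obtain ⟨u, w, p, hp, hlen, -⟩ := exists_long_path hac D' h2'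
    (show (⟨v0, hDsub v0 hv0⟩ : ↥(mVerts M)) ∈ D' from hv0)
    (Fintype.card ↥(mVerts M))
  have := hp.length_lt
  omega
end

section
/- A matching M in a finite simple graph G is uniquely restricted if and only if there is no M-alternating cycle in G, where an M-alternating cycle is a cycle in G every second edge of which belongs to M. -/
variable {V : Type*}

/-- An `M`-alternating cycle: a cycle in `G` every second edge of which belongs to `M`,
i.e. the membership in `M` of the edges alternates around the cycle (including the
wrap-around between the last and the first edge). -/
def IsAlternatingCycle (G : SimpleGraph V) (M : Finset (Sym2 V)) {v : V}
    (c : G.Walk v v) : Prop :=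
  c.IsCycle ∧ List.Chain' (fun e f => (e ∈ M ↔ f ∉ M)) (c.edges ++ c.edges.take 1)

/-!
If `c` is an `M`-alternating cycle, then `M ∆ E(c)` is another matching with the same vertex set,
because every vertex of `c` lies on exactly two edges of `c`, exactly one of which is in `M`.
Conversely, if `M' ≠ M` are matchings with `V(M') = V(M)`, then in the graph with edge set
`M ∆ M'` every non-isolated vertex lies on one edge of `M \ M'` and one edge of `M' \ M`. Hence
this graph is a nonempty disjoint union of cycles whose edges alternate between `M` and `M'`, and
any of these cycles is `M`-alternating.
-/

open SimpleGraph
open scoped symmDiff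

namespace List
variable {α : Type*} {R S : α → α → Prop} {l : List α}

lemma IsChain.and (hR : IsChain R l) (hS : IsChain S l) :
    IsChain (fun a b => R a b ∧ S a b) l :=
  isChain_iff_getElem.2 fun i hi => ⟨hR.getElem i hi, hS.getElem i hi⟩

lemma IsChain.append_take_one (h : IsChain R l)
    (hwrap : ∀ a ∈ l.getLast?, ∀ b ∈ l.head?, R a b) : IsChain R (l ++ l.take 1) := by
  refine isChain_append.2 ⟨h, ?_, by simpa [head?_take] using hwrap⟩
  rcases l with _ | ⟨a, l⟩ <;> simp

lemma IsChain.exists_rel_of_append_take_one (h : IsChain R (l ++ l.take 1)) {a : α}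
    (ha : a ∈ l) : ∃ b ∈ l, R a b := by
  obtain ⟨s, t, rfl⟩ := append_of_mem ha
  have hrel := isChain_iff_forall_rel_of_append_cons_cons.1 h
  rcases t with _ | ⟨b, t⟩
  · obtain ⟨c, hc⟩ : ∃ c, (s ++ [a]).take 1 = [c] := by rcases s <;> simp
    exact ⟨c, take_subset 1 _ (hc ▸ mem_singleton_self c),
      hrel (l₁ := s) (l₂ := []) (by simp [hc])⟩
  · exact ⟨b, by simp, hrel (l₁ := s) (by rw [append_assoc]; rfl)⟩

end List

namespace SimpleGraph.Walk
variable {G : SimpleGraph V} {u : V}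

lemma isChain_dartAdj_darts_append_take_one (c : G.Walk u u) :
    List.IsChain G.DartAdj (c.darts ++ c.darts.take 1) := by
  refine c.isChain_dartAdj_darts.append_take_one fun d hd d' hd' => ?_
  obtain ⟨-, rfl⟩ := List.mem_getLast?_eq_getLast hd
  have hne : c.darts ≠ [] := by rintro h; simp [h] at hd'
  rw [List.head?_eq_some_head hne, Option.mem_some_iff] at hd'
  simp [DartAdj, ← hd']

lemma IsCycle.isChain_edge_ne_darts_append_take_one {c : G.Walk u u} (hc : c.IsCycle) :
    List.IsChain (fun d d' : G.Dart => d.edge ≠ d'.edge) (c.darts ++ c.darts.take 1) := by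
  refine List.IsChain.append_take_one ?_ fun d hd d' hd' => ?_
  · exact (List.isChain_map _).1 (List.Pairwise.isChain hc.edges_nodup)
  · obtain ⟨hne, rfl⟩ := List.mem_getLast?_eq_getLast hd
    rw [List.head?_eq_some_head hne, Option.mem_some_iff] at hd'
    rw [getLast_darts_eq_lastDart, ← hd', head_darts_eq_firstDart, edge_lastDart, edge_firstDart,
      Sym2.eq_swap, Ne, Sym2.congr_right]
    exact hc.snd_ne_penultimate.symm

lemma IsCycle.isChain_edges_of_isAlternating {H : SimpleGraph V} {M : Set (Sym2 V)}
    {c : H.Walk u u} (hc : c.IsCycle) (halt : H.IsAlternating (fromEdgeSet M)) :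
    List.IsChain (fun e f => e ∈ M ↔ f ∉ M) (c.edges ++ c.edges.take 1) := by
  rw [edges, ← List.map_take, ← List.map_append, List.isChain_map]
  refine (c.isChain_dartAdj_darts_append_take_one.and
    hc.isChain_edge_ne_darts_append_take_one).imp ?_
  rintro ⟨⟨a, v⟩, hav⟩ ⟨⟨v', b⟩, hvb⟩ ⟨rfl : v = v', hne⟩
  have hab : a ≠ b := by
    rintro rfl
    exact hne Sym2.eq_swap
  simpa [fromEdgeSet_adj, hav.ne.symm, hvb.ne, Sym2.eq_swap] using halt hab hav.symm hvb

end SimpleGraph.Walk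

lemma exists_mk_mem_of_mem_mVerts {M : Finset (Sym2 V)} {v : V} (hv : v ∈ mVerts M) :
    ∃ w, s(v, w) ∈ M := by
  obtain ⟨e, he, hve⟩ := hv
  obtain ⟨w, rfl⟩ := Sym2.mem_iff_exists.1 hve
  exact ⟨w, he⟩

namespace IsMatching
variable {G : SimpleGraph V} {M M' : Finset (Sym2 V)} {v w w' : V}

lemma eq_of_mem_of_mem (hM : IsMatching G M) {e f : Sym2 V} (he : e ∈ M) (hf : f ∈ M)
    (hve : v ∈ e) (hvf : v ∈ f) : e = f :=
  by_contra fun hef => hM.2 e he f hf hef v hve hvf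

lemma eq_of_mk_mem_of_mk_mem (hM : IsMatching G M) (hw : s(v, w) ∈ M) (hw' : s(v, w') ∈ M) :
    w = w' :=
  Sym2.congr_right.1 (hM.eq_of_mem_of_mem hw hw' (Sym2.mem_mk_left _ _) (Sym2.mem_mk_left _ _))

lemma ne_of_mk_mem (hM : IsMatching G M) (h : s(v, w) ∈ M) : v ≠ w :=
  (G.mem_edgeSet.1 (hM.1 h)).ne

lemma neighborSet_symmDiff_eq_pair (hM : IsMatching G M) (hM' : IsMatching G M')
    (hv : v ∈ mVerts M') (hw : s(v, w) ∈ M) (hw' : s(v, w) ∉ M') :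
    ∃ w', w ≠ w' ∧ (fromEdgeSet ((M : Set (Sym2 V)) ∆ M')).neighborSet v = {w, w'} := by
  obtain ⟨w', hvw'⟩ := exists_mk_mem_of_mem_mVerts hv
  have hww' : w ≠ w' := by
    rintro rfl
    exact hw' hvw'
  refine ⟨w', hww', Set.ext fun y => ?_⟩
  simp only [mem_neighborSet, fromEdgeSet_adj, Set.mem_symmDiff, Finset.mem_coe,
    Set.mem_insert_iff, Set.mem_singleton_iff]
  constructor
  · rintro ⟨⟨hy, -⟩ | ⟨hy, -⟩, -⟩
    · exact .inl (hM.eq_of_mk_mem_of_mk_mem hy hw)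
    · exact .inr (hM'.eq_of_mk_mem_of_mk_mem hy hvw')
  · rintro (rfl | rfl)
    · exact ⟨.inl ⟨hw, hw'⟩, hM.ne_of_mk_mem hw⟩
    · exact ⟨.inr ⟨hvw', fun h => hww' (hM.eq_of_mk_mem_of_mk_mem hw h)⟩,
        hM'.ne_of_mk_mem hvw'⟩

lemma isCycles_symmDiff (hM : IsMatching G M) (hM' : IsMatching G M')
    (hV : mVerts M' = mVerts M) : (fromEdgeSet ((M : Set (Sym2 V)) ∆ M')).IsCycles := by
  rintro v ⟨w, hvw⟩
  simp only [mem_neighborSet, fromEdgeSet_adj, Set.mem_symmDiff, Finset.mem_coe] at hvw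
  rcases hvw.1 with ⟨hw, hw'⟩ | ⟨hw', hw⟩
  · obtain ⟨w', hne, h⟩ :=
      neighborSet_symmDiff_eq_pair hM hM' (hV ▸ ⟨_, hw, Sym2.mem_mk_left _ _⟩) hw hw'
    rw [h, Set.ncard_pair hne]
  · obtain ⟨w', hne, h⟩ :=
      neighborSet_symmDiff_eq_pair hM' hM (hV.symm ▸ ⟨_, hw', Sym2.mem_mk_left _ _⟩) hw' hw
    rw [symmDiff_comm, h, Set.ncard_pair hne]

lemma isAlternating_symmDiff (hM : IsMatching G M) (hM' : IsMatching G M') :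
    (fromEdgeSet ((M : Set (Sym2 V)) ∆ M')).IsAlternating (fromEdgeSet M) := by
  intro v w w' hww' hw hw'
  simp only [fromEdgeSet_adj, Set.mem_symmDiff, Finset.mem_coe] at hw hw' ⊢
  refine ⟨fun h h' => hww' (hM.eq_of_mk_mem_of_mk_mem h.1 h'.1), fun h' => ⟨?_, hw.2⟩⟩
  by_contra h
  have hwM' : s(v, w) ∈ M' := hw.1.resolve_left (fun h'' => h h''.1) |>.1
  have hw'M' : s(v, w') ∈ M' := hw'.1.resolve_left (fun h'' => h' ⟨h''.1, hw'.2⟩) |>.1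
  exact hww' (hM'.eq_of_mk_mem_of_mk_mem hwM' hw'M')

end IsMatching

lemma exists_isAlternatingCycle_of_ne_of_mVerts_eq [Finite V] {G : SimpleGraph V}
    {M M' : Finset (Sym2 V)}
    (hM : IsMatching G M) (hM' : IsMatching G M') (hne : M' ≠ M) (hV : mVerts M' = mVerts M) :
    ∃ (v : V) (c : G.Walk v v), IsAlternatingCycle G M c := by
  set H := fromEdgeSet ((M : Set (Sym2 V)) ∆ M')
  have hHG : H ≤ G := by
    rintro v w ⟨hvw | hvw, -⟩
    exacts [hM.1 hvw.1, hM'.1 hvw.1]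
  obtain ⟨e, he⟩ : ((M : Set (Sym2 V)) ∆ M').Nonempty := by
    rw [Set.nonempty_iff_ne_empty, Ne, Set.symmDiff_eq_empty, Finset.coe_inj]
    exact hne.symm
  induction e using Sym2.ind with | _ v w =>
  have hvw : H.Adj v w := ⟨he, he.elim (hM.ne_of_mk_mem ·.1) (hM'.ne_of_mk_mem ·.1)⟩
  obtain ⟨u, c, hc, -⟩ := adj_and_reachable_delete_edges_iff_exists_cycle.1
    ⟨hvw, (hM.isCycles_symmDiff hM' hV).reachable_deleteEdges hvw⟩
  refine ⟨u, c.mapLe hHG, hc.mapLe hHG, ?_⟩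
  rw [Walk.edges_mapLe_eq_edges]
  exact hc.isChain_edges_of_isAlternating (hM.isAlternating_symmDiff hM')

namespace IsAlternatingCycle
variable {G : SimpleGraph V} {M : Finset (Sym2 V)} {u x : V} {c : G.Walk u u}

lemma isChain_darts (hc : IsAlternatingCycle G M c) :
    List.IsChain (fun d d' : G.Dart => d.snd = d'.fst ∧ (d.edge ∈ M ↔ d'.edge ∉ M))
      (c.darts ++ c.darts.take 1) := by
  have halt : List.IsChain _ _ := hc.2
  rw [Walk.edges, ← List.map_take, ← List.map_append, List.isChain_map] at halt
  exact c.isChain_dartAdj_darts_append_take_one.and halt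

lemma exists_mem_edges_mem (hc : IsAlternatingCycle G M c) (hx : x ∈ c.support) :
    ∃ e ∈ c.edges, e ∈ M ∧ x ∈ e := by
  obtain ⟨d, hd, rfl⟩ : ∃ d ∈ c.darts, d.snd = x := by
    rw [← List.mem_map, Walk.map_snd_darts]
    rcases c.mem_support_iff.1 hx with rfl | h
    exacts [Walk.end_mem_tail_support hc.1.not_nil, h]
  obtain ⟨d', hd', hadj, halt⟩ := hc.isChain_darts.exists_rel_of_append_take_one hd
  by_cases hdM : d.edge ∈ M
  · exact ⟨d.edge, List.mem_map_of_mem hd, hdM, Sym2.mem_mk_right _ _⟩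
  · exact ⟨d'.edge, List.mem_map_of_mem hd', not_not.1 (halt.not.1 hdM),
      hadj ▸ Sym2.mem_mk_left _ _⟩

lemma exists_mem_edges_not_mem (hM : IsMatching G M) (hc : IsAlternatingCycle G M c)
    (hx : x ∈ c.support) : ∃ e ∈ c.edges, e ∉ M ∧ x ∈ e := by
  obtain ⟨e, -, heM, hxe⟩ := hc.exists_mem_edges_mem hx
  obtain ⟨w, rfl⟩ := Sym2.mem_iff_exists.1 hxe
  obtain ⟨y, hy, hyw⟩ := Set.exists_ne_of_one_lt_ncard
    (by rw [hc.1.ncard_neighborSet_toSubgraph_eq_two hx]; norm_num) w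
  rw [Subgraph.mem_neighborSet, Walk.adj_toSubgraph_iff_mem_edges] at hy
  exact ⟨s(x, y), hy, fun h => hyw (hM.eq_of_mk_mem_of_mk_mem h heM), Sym2.mem_mk_left _ _⟩

lemma eq_of_mem_edges_of_not_mem (hc : IsAlternatingCycle G M c) {e f : Sym2 V}
    (he : e ∈ c.edges) (heM : e ∉ M) (hf : f ∈ c.edges) (hfM : f ∉ M)
    (hxe : x ∈ e) (hxf : x ∈ f) : e = f := by
  have hx := Walk.mem_support_of_mem_edges he hxe
  obtain ⟨g, hg, hgM, hxg⟩ := hc.exists_mem_edges_mem hx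
  obtain ⟨y, rfl⟩ := Sym2.mem_iff_exists.1 hxe
  obtain ⟨z, rfl⟩ := Sym2.mem_iff_exists.1 hxf
  obtain ⟨w, rfl⟩ := Sym2.mem_iff_exists.1 hxg
  obtain ⟨a, b, -, hab⟩ := Set.ncard_eq_two.1 (hc.1.ncard_neighborSet_toSubgraph_eq_two hx)
  have hnbr : ∀ t, s(x, t) ∈ c.edges → t = a ∨ t = b := fun t ht => by
    have : t ∈ c.toSubgraph.neighborSet x := Walk.adj_toSubgraph_iff_mem_edges.2 ht
    simpa [hab] using this
  have hwy : w ≠ y := by rintro rfl; exact heM hgM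
  have hwz : w ≠ z := by rintro rfl; exact hfM hgM
  rcases hnbr w hg with rfl | rfl <;> rcases hnbr y he with rfl | rfl <;>
    rcases hnbr z hf with rfl | rfl <;> simp_all

variable [DecidableEq V]

lemma isMatching_symmDiff (hM : IsMatching G M) (hc : IsAlternatingCycle G M c) :
    IsMatching G (M ∆ c.edges.toFinset) := by
  refine ⟨fun e he => ?_, fun e he f hf hef x hxe hxf => ?_⟩
  · rcases Finset.mem_symmDiff.1 he with ⟨heM, -⟩ | ⟨hec, -⟩
    exacts [hM.1 heM, c.edges_subset_edgeSet (List.mem_toFinset.1 hec)]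
  simp only [Finset.mem_symmDiff, List.mem_toFinset] at he hf
  rcases he with ⟨heM, hec⟩ | ⟨hec, heM⟩ <;> rcases hf with ⟨hfM, hfc⟩ | ⟨hfc, hfM⟩
  · exact hM.2 e heM f hfM hef x hxe hxf
  · obtain ⟨g, hg, hgM, hxg⟩ := hc.exists_mem_edges_mem (Walk.mem_support_of_mem_edges hfc hxf)
    exact hec (hM.eq_of_mem_of_mem heM hgM hxe hxg ▸ hg)
  · obtain ⟨g, hg, hgM, hxg⟩ := hc.exists_mem_edges_mem (Walk.mem_support_of_mem_edges hec hxe)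
    exact hfc (hM.eq_of_mem_of_mem hfM hgM hxf hxg ▸ hg)
  · exact hef (hc.eq_of_mem_edges_of_not_mem hec heM hfc hfM hxe hxf)

lemma mVerts_symmDiff (hM : IsMatching G M) (hc : IsAlternatingCycle G M c) :
    mVerts (M ∆ c.edges.toFinset) = mVerts M := by
  ext x
  simp only [mVerts, Set.mem_ofPred_eq, Finset.mem_symmDiff, List.mem_toFinset]
  constructor
  · rintro ⟨e, ⟨heM, -⟩ | ⟨hec, -⟩, hxe⟩
    · exact ⟨e, heM, hxe⟩
    · obtain ⟨g, -, hgM, hxg⟩ :=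
        hc.exists_mem_edges_mem (Walk.mem_support_of_mem_edges hec hxe)
      exact ⟨g, hgM, hxg⟩
  · rintro ⟨e, heM, hxe⟩
    by_cases hec : e ∈ c.edges
    · obtain ⟨g, hg, hgM, hxg⟩ :=
        hc.exists_mem_edges_not_mem hM (Walk.mem_support_of_mem_edges hec hxe)
      exact ⟨g, .inr ⟨hg, hgM⟩, hxg⟩
    · exact ⟨e, .inl ⟨heM, hec⟩, hxe⟩

lemma symmDiff_ne (hc : IsAlternatingCycle G M c) : M ∆ c.edges.toFinset ≠ M := by
  rw [Ne, symmDiff_eq_left, Finset.bot_eq_empty, List.toFinset_eq_empty_iff, Walk.edges_eq_nil]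
  exact hc.1.not_nil

end IsAlternatingCycle

/-- A matching `M` in `G` is uniquely restricted if and only if there is no
`M`-alternating cycle in `G`. -/
theorem uniquelyRestricted_iff_no_alternating_cycle {V : Type*} [Fintype V]
    (G : SimpleGraph V) (M : Finset (Sym2 V)) (hM : IsMatching G M) :
    (¬ ∃ M' : Finset (Sym2 V), IsMatching G M' ∧ M' ≠ M ∧ mVerts M' = mVerts M) ↔
      ¬ ∃ (v : V) (c : G.Walk v v), IsAlternatingCycle G M c := by
  classical
  refine ⟨fun hUR ⟨_, c, hc⟩ => hUR ?_, fun hno ⟨M', hM', hne, hV⟩ => hno ?_⟩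
  · exact ⟨M ∆ c.edges.toFinset, hc.isMatching_symmDiff hM, hc.symmDiff_ne,
      hc.mVerts_symmDiff hM⟩
  · exact exists_isAlternatingCycle_of_ne_of_mVerts_eq hM hM' hne hV
end
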